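/- arXiv:2007.01613 — 2 statements merged into one kernel-verified Lean document; each statement's English description precedes it below -/
import Mathlib

section
/- Let N₁ ≥ 4N₂ > 0 and suppose (ξ₁, μ₁) satisfies |(ξ₁,μ₁)| ∈ [ (5/8)N₁, (8/5)N₁ ] and (ξ−ξ₁, μ−μ₁) satisfies |(ξ−ξ₁, μ−μ₁)| ≤ (8/5)N₂. If |ξ₁| ≥ 4|μ₁| or |μ₁| ≥ 4|ξ₁|, then |3(ξ₁² − μ₁²) − 3((ξ−ξ₁)² − (μ−μ₁)²)| ≥ c·N₁² for some absolute constant c > 0. -/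
/-- Lower bound on the `ξ₁`-derivative of the resonance function in the high×low
frequency regime, away from the diagonals `|ξ₁| ∼ |μ₁|`. -/
theorem resonance_xi_deriv_lower_bound :
    ∃ c : ℝ, 0 < c ∧ ∀ N₁ N₂ ξ μ ξ₁ μ₁ : ℝ, 0 < N₂ → 4*N₂ ≤ N₁ →
      (5/8)*N₁ ≤ Real.sqrt (ξ₁^2 + μ₁^2) → Real.sqrt (ξ₁^2 + μ₁^2) ≤ (8/5)*N₁ →
      Real.sqrt ((ξ - ξ₁)^2 + (μ - μ₁)^2) ≤ (8/5)*N₂ →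
      (4*|μ₁| ≤ |ξ₁| ∨ 4*|ξ₁| ≤ |μ₁|) →
      c*N₁^2 ≤ |3*(ξ₁^2 - μ₁^2) - 3*((ξ - ξ₁)^2 - (μ - μ₁)^2)| := by
  refine ⟨1/2, by norm_num, fun N₁ N₂ ξ μ ξ₁ μ₁ hN₂ hN h1 h2 h3 hcase => ?_⟩
  have hN₁ : 0 < N₁ := lt_of_lt_of_le (by linarith) hN
  have hlo : (25/64)*N₁^2 ≤ ξ₁^2 + μ₁^2 := by
    have hx : (0:ℝ) ≤ (5/8)*N₁ := by linarith
    have h1' : ((5/8)*N₁)^2 ≤ ξ₁^2 + μ₁^2 := (Real.le_sqrt hx (by positivity)).mp h1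
    nlinarith [h1']
  have hhi : (ξ - ξ₁)^2 + (μ - μ₁)^2 ≤ (64/25)*N₂^2 := by
    have h0 : (0:ℝ) ≤ (ξ - ξ₁)^2 + (μ - μ₁)^2 := by positivity
    have := Real.sqrt_nonneg ((ξ - ξ₁)^2 + (μ - μ₁)^2)
    nlinarith [Real.sq_sqrt h0, sq_nonneg (Real.sqrt ((ξ - ξ₁)^2 + (μ - μ₁)^2) - (8/5)*N₂)]
  have hlow : (ξ - ξ₁)^2 + (μ - μ₁)^2 ≤ (4/25)*N₁^2 := by nlinarith
  rcases hcase with h | h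
  · have h16 : 16*μ₁^2 ≤ ξ₁^2 := by
      have := abs_nonneg μ₁
      nlinarith [sq_abs ξ₁, sq_abs μ₁]
    refine le_trans ?_ (le_abs_self _)
    nlinarith [sq_nonneg (μ - μ₁), sq_nonneg (ξ - ξ₁)]
  · have h16 : 16*ξ₁^2 ≤ μ₁^2 := by
      have := abs_nonneg ξ₁
      nlinarith [sq_abs ξ₁, sq_abs μ₁]
    refine le_trans ?_ (neg_le_abs _)
    nlinarith [sq_nonneg (μ - μ₁), sq_nonneg (ξ - ξ₁)]
end

section
/- Let N₁ ≥ 4N₂ > 0 and suppose |(ξ₁,μ₁)| ∈ [ (5/8)N₁, (8/5)N₁ ], |(ξ−ξ₁, μ−μ₁)| ≤ (8/5)N₂, and (1/4)|μ₁| ≤ |ξ₁| ≤ 4|μ₁|. Then |6ξ₁μ₁ − 6(ξ−ξ₁)(μ−μ₁)| ≥ c·N₁² for some absolute constant c > 0. -/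
set_option maxHeartbeats 1000000 in
/-- Lower bound on the `μ₁`-derivative of the resonance function in the high×low
frequency regime, in the region where `|ξ₁| ∼ |μ₁|`. -/
theorem resonance_mu_deriv_lower_bound :
    ∃ c : ℝ, 0 < c ∧ ∀ N₁ N₂ ξ μ ξ₁ μ₁ : ℝ, 0 < N₂ → 4*N₂ ≤ N₁ →
      (5/8)*N₁ ≤ Real.sqrt (ξ₁^2 + μ₁^2) → Real.sqrt (ξ₁^2 + μ₁^2) ≤ (8/5)*N₁ →
      Real.sqrt ((ξ - ξ₁)^2 + (μ - μ₁)^2) ≤ (8/5)*N₂ →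
      (1/4)*|μ₁| ≤ |ξ₁| → |ξ₁| ≤ 4*|μ₁| →
      c*N₁^2 ≤ |6*ξ₁*μ₁ - 6*(ξ - ξ₁)*(μ - μ₁)| := by
  refine ⟨243/3400, by norm_num, ?_⟩
  intro N₁ N₂ ξ μ ξ₁ μ₁ hN₂ hN h1 h2 h3 h4 h5
  have hN₁ : 0 < N₁ := by linarith
  have hq1 := Real.sq_sqrt (by positivity : (0:ℝ) ≤ ξ₁^2 + μ₁^2)
  have hq2 := Real.sq_sqrt (by positivity : (0:ℝ) ≤ (ξ - ξ₁)^2 + (μ - μ₁)^2)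
  have hs1 : (25/64)*N₁^2 ≤ ξ₁^2 + μ₁^2 := by
    nlinarith [Real.sqrt_nonneg (ξ₁^2 + μ₁^2)]
  have hs2 : (ξ - ξ₁)^2 + (μ - μ₁)^2 ≤ (64/25)*N₂^2 := by
    nlinarith [Real.sqrt_nonneg ((ξ - ξ₁)^2 + (μ - μ₁)^2)]
  have habs : 4*(ξ₁^2 + μ₁^2) ≤ 17*(|ξ₁| * |μ₁|) := by
    nlinarith [mul_nonneg (by linarith : (0:ℝ) ≤ 4*|μ₁| - |ξ₁|)
      (by linarith : (0:ℝ) ≤ 4*|ξ₁| - |μ₁|), sq_abs ξ₁, sq_abs μ₁]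
  have hprod : |(ξ - ξ₁)*(μ - μ₁)| ≤ (32/25)*N₂^2 := by
    rw [abs_mul]
    nlinarith [sq_nonneg (|ξ - ξ₁| - |μ - μ₁|), sq_abs (ξ - ξ₁), sq_abs (μ - μ₁)]
  have hmain := abs_sub_abs_le_abs_sub (6*ξ₁*μ₁) (6*(ξ - ξ₁)*(μ - μ₁))
  have h6a : |6*ξ₁*μ₁| = 6*(|ξ₁| * |μ₁|) := by
    rw [abs_mul, abs_mul, abs_of_nonneg (by norm_num : (0:ℝ) ≤ (6:ℝ))]; ring
  have h6b : |6*(ξ - ξ₁)*(μ - μ₁)| = 6*|(ξ - ξ₁)*(μ - μ₁)| := by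
    rw [mul_assoc, abs_mul]; norm_num
  rw [h6a, h6b] at hmain
  have hN2sq : N₂^2 ≤ (1/16)*N₁^2 := by nlinarith
  linarith [hmain, habs, hs1, hprod, hN2sq]
end
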